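/- arXiv:2208.03010 — 2 statements merged into one kernel-verified Lean document; each statement's English description precedes it below -/
import Mathlib

section
/- Let (X,d) be a metric space and (x_k) a sequence in X. Then the set Γ_x of A^I-statistical cluster points of (x_k) is a closed subset of X (paper's Theorem 4.4). -/
open Filter Topology

/-- `A` is a nonnegative regular summability matrix. -/
structure RegularMatrix (A : ℕ → ℕ → ℝ) : Prop where
  nonneg : ∀ n k, 0 ≤ A n k
  summable : ∀ n, Summable (A n)
  bounded : ∃ C : ℝ, ∀ n, (∑' k, |A n k|) ≤ C
  col_lim : ∀ k, Tendsto (fun n => A n k) atTop (𝓝 0)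
  row_sum : Tendsto (fun n => ∑' k, A n k) atTop (𝓝 1)

/-- `I` is a non-trivial admissible ideal on ℕ. -/
structure AdmissibleIdeal (I : Set (Set ℕ)) : Prop where
  union_mem : ∀ {a b : Set ℕ}, a ∈ I → b ∈ I → a ∪ b ∈ I
  subset_mem : ∀ {a b : Set ℕ}, a ∈ I → b ⊆ a → b ∈ I
  finite_mem : ∀ {s : Set ℕ}, s.Finite → s ∈ I
  univ_not_mem : Set.univ ∉ I

/-- `I`-limit of a real sequence. -/
def ILim (I : Set (Set ℕ)) (t : ℕ → ℝ) (L : ℝ) : Prop :=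
  ∀ ε > 0, {n : ℕ | ε ≤ |t n - L|} ∈ I

/-- The set `M ⊆ ℕ` has `A^I`-density `δ`, i.e. `I-lim_n Σ_{k∈M} a_{nk} = δ`. -/
def AIDensity (I : Set (Set ℕ)) (A : ℕ → ℕ → ℝ) (M : Set ℕ) (δ : ℝ) : Prop :=
  ILim I (fun n => ∑' k, M.indicator (A n) k) δ

/-- `x` is `A^I`-statistically convergent to `L`. -/
def AIStatConv {X : Type*} [MetricSpace X] (I : Set (Set ℕ)) (A : ℕ → ℕ → ℝ)
    (x : ℕ → X) (L : X) : Prop :=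
  ∀ ε > 0, AIDensity I A {k : ℕ | ε ≤ dist (x k) L} 0

/-- `x` is `A^I`-statistically Cauchy. -/
def AIStatCauchy {X : Type*} [MetricSpace X] (I : Set (Set ℕ)) (A : ℕ → ℕ → ℝ)
    (x : ℕ → X) : Prop :=
  ∀ γ > 0, ∃ k₀ : ℕ, AIDensity I A {k : ℕ | γ ≤ dist (x k) (x k₀)} 0

/-- The additive property for `A^I`-density zero sets (AP`A^I`O). -/
def APAIO (I : Set (Set ℕ)) (A : ℕ → ℕ → ℝ) : Prop :=
  ∀ G : ℕ → Set ℕ, Pairwise (Function.onFun Disjoint G) →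
    (∀ j, AIDensity I A (G j) 0) →
    ∃ H : ℕ → Set ℕ, (∀ j, (symmDiff (G j) (H j)).Finite) ∧
      AIDensity I A (⋃ j, H j) 0

/-- The set of `A^I`-statistical limit points of `x`: points to which some
subsequence of `x`, indexed by an (automatically infinite) set of indices whose
`A^I`-density is not equal to `0` (nonzero or nonexistent), converges. -/
def AIStatLimitPts {X : Type*} [MetricSpace X] (I : Set (Set ℕ)) (A : ℕ → ℕ → ℝ)
    (x : ℕ → X) : Set X :=
  {ζ : X | ∃ f : ℕ → ℕ, StrictMono f ∧ ¬ AIDensity I A (Set.range f) 0 ∧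
    Tendsto (fun j => x (f j)) atTop (𝓝 ζ)}

/-- The set of `A^I`-statistical cluster points of `x`. -/
def AIStatClusterPts {X : Type*} [MetricSpace X] (I : Set (Set ℕ)) (A : ℕ → ℕ → ℝ)
    (x : ℕ → X) : Set X :=
  {ν : X | ∀ ε > 0, ¬ AIDensity I A {k : ℕ | dist (x k) ν < ε} 0}

/-- The set of ordinary limit points of `x` (limits of subsequences). -/
def LimitPts {X : Type*} [MetricSpace X] (x : ℕ → X) : Set X :=
  {ζ : X | ∃ f : ℕ → ℕ, StrictMono f ∧ Tendsto (fun j => x (f j)) atTop (𝓝 ζ)}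

lemma aidensity_mono {A : ℕ → ℕ → ℝ} {I : Set (Set ℕ)}
    (hA : RegularMatrix A) (hI : AdmissibleIdeal I) {M N : Set ℕ} (hMN : M ⊆ N)
    (hN : AIDensity I A N 0) : AIDensity I A M 0 := by
  intro ε hε
  refine hI.subset_mem (hN ε hε) ?_
  intro n hn
  simp only [Set.mem_setOf_eq, sub_zero] at hn ⊢
  have hsumN : Summable (N.indicator (A n)) := (hA.summable n).indicator N
  have hsumM : Summable (M.indicator (A n)) := (hA.summable n).indicator M
  have hle : (∑' k, M.indicator (A n) k) ≤ ∑' k, N.indicator (A n) k :=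
    Summable.tsum_le_tsum (fun k => Set.indicator_le_indicator_of_subset hMN (fun k => hA.nonneg n k) k)
      hsumM hsumN
  have h0M : 0 ≤ ∑' k, M.indicator (A n) k :=
    tsum_nonneg (fun k => Set.indicator_nonneg (fun k _ => hA.nonneg n k) k)
  have h0N : 0 ≤ ∑' k, N.indicator (A n) k :=
    tsum_nonneg (fun k => Set.indicator_nonneg (fun k _ => hA.nonneg n k) k)
  rw [abs_of_nonneg h0N]
  rw [abs_of_nonneg h0M] at hn
  linarith

theorem stmt_16 {X : Type*} [MetricSpace X] (A : ℕ → ℕ → ℝ) (I : Set (Set ℕ))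
    (hA : RegularMatrix A) (hI : AdmissibleIdeal I) (x : ℕ → X) :
    IsClosed (AIStatClusterPts I A x) := by
  rw [← isOpen_compl_iff] at *
  rw [isOpen_iff_forall_mem_open]
  intro ν hν
  simp only [AIStatClusterPts, Set.mem_compl_iff, Set.mem_setOf_eq, not_forall, not_not] at hν
  obtain ⟨ε, hε, hdens⟩ := hν
  refine ⟨Metric.ball ν (ε/2), ?_, Metric.isOpen_ball, by simp [hε]⟩
  intro μ hμ
  simp only [Metric.mem_ball] at hμ
  intro hcl
  exact hcl (ε/2) (by linarith) (aidensity_mono hA hI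
    (fun k hk => by
      simp only [Set.mem_setOf_eq] at hk ⊢
      calc dist (x k) ν ≤ dist (x k) μ + dist μ ν := dist_triangle _ _ _
        _ < ε := by linarith) hdens)
end

section
/- Let (X,d) be a metric space and (x_k) a sequence in X that is A^I-statistically bounded, i.e., there exists a compact subset C of X with δ_{A^I}({k ∈ ℕ : x_k ∉ C}) = 0. Then the set Γ_x of A^I-statistical cluster points of (x_k) is non-empty and compact; moreover Γ_x ⊆ C (paper's Theorem 4.7). -/
open Filter Topology

/-!
The sets of `A^I`-density zero form an ideal of subsets of `ℕ`, proper because regularity of `A`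
gives `ℕ` density one; their complements therefore form a nontrivial filter `F` on `ℕ`.
An `A^I`-statistical cluster point of `x` is exactly a cluster point of `x` along `F`, and
statistical boundedness says that `x k ∈ C` eventually along `F`. Compactness of `C` yields a
cluster point, every cluster point lies in the closed set `C`, and the cluster points of a
filter form a closed set.
-/

namespace RegularMatrix

variable {A : ℕ → ℕ → ℝ} (hA : RegularMatrix A)
include hA

lemma tsum_indicator_nonneg (M : Set ℕ) (n : ℕ) : 0 ≤ ∑' k, M.indicator (A n) k :=
  tsum_nonneg <| Set.indicator_nonneg fun k _ => hA.nonneg n k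

lemma tsum_indicator_mono {M N : Set ℕ} (h : M ⊆ N) (n : ℕ) :
    ∑' k, M.indicator (A n) k ≤ ∑' k, N.indicator (A n) k :=
  ((hA.summable n).indicator M).tsum_le_tsum
    (Set.indicator_le_indicator_of_subset h fun k => hA.nonneg n k) ((hA.summable n).indicator N)

lemma tsum_indicator_union_le (M N : Set ℕ) (n : ℕ) :
    ∑' k, (M ∪ N).indicator (A n) k ≤ ∑' k, M.indicator (A n) k + ∑' k, N.indicator (A n) k := by
  have hs := hA.summable n
  have h := congrArg (fun f => ∑' k, f k) (Set.indicator_union_add_inter (A n) M N)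
  simp only [Pi.add_apply] at h
  rw [(hs.indicator _).tsum_add (hs.indicator _), (hs.indicator _).tsum_add (hs.indicator _)] at h
  linarith [hA.tsum_indicator_nonneg (M ∩ N) n]

lemma aIDensity_zero_iff {I : Set (Set ℕ)} {M : Set ℕ} :
    AIDensity I A M 0 ↔ ∀ ε > 0, {n | ε ≤ ∑' k, M.indicator (A n) k} ∈ I := by
  simp only [AIDensity, ILim, sub_zero, abs_of_nonneg (hA.tsum_indicator_nonneg M _)]

end RegularMatrix

section DensityZero

variable {A : ℕ → ℕ → ℝ} {I : Set (Set ℕ)}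

lemma aIDensity_empty_zero (hI : AdmissibleIdeal I) : AIDensity I A ∅ 0 := fun _ hε =>
  hI.finite_mem <| Set.finite_empty.subset fun n hn => by
    simp only [Set.mem_ofPred_eq, Set.indicator_empty, tsum_zero, sub_zero, abs_zero] at hn
    exact (hn.not_gt hε).elim

lemma AIDensity.zero_mono (hA : RegularMatrix A) (hI : AdmissibleIdeal I) {M N : Set ℕ}
    (hN : AIDensity I A N 0) (h : M ⊆ N) : AIDensity I A M 0 := by
  rw [hA.aIDensity_zero_iff] at hN ⊢
  exact fun ε hε => hI.subset_mem (hN ε hε) fun n hn => hn.trans (hA.tsum_indicator_mono h n)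

lemma AIDensity.zero_union (hA : RegularMatrix A) (hI : AdmissibleIdeal I) {M N : Set ℕ}
    (hM : AIDensity I A M 0) (hN : AIDensity I A N 0) : AIDensity I A (M ∪ N) 0 := by
  rw [hA.aIDensity_zero_iff] at hM hN ⊢
  intro ε hε
  refine hI.subset_mem (hI.union_mem (hM (ε / 2) (half_pos hε)) (hN (ε / 2) (half_pos hε))) ?_
  intro n hn
  by_contra! h
  simp only [Set.mem_union, Set.mem_ofPred_eq, not_or, not_le] at h hn
  linarith [hA.tsum_indicator_union_le M N n]

/-- Regularity forces the row sums `∑' k, A n k` to exceed `1 / 2` for all but finitely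
many `n`, so density zero of `univ` would put `univ` in `I`. -/
lemma not_aIDensity_univ_zero (hA : RegularMatrix A) (hI : AdmissibleIdeal I) :
    ¬ AIDensity I A Set.univ 0 := by
  rw [hA.aIDensity_zero_iff]
  intro h
  have hlarge : ∀ᶠ n in cofinite, 1 / 2 < ∑' k, Set.univ.indicator (A n) k := by
    simpa [Nat.cofinite_eq_atTop] using hA.row_sum.eventually (lt_mem_nhds (by norm_num))
  refine hI.univ_not_mem <| hI.subset_mem
    (hI.union_mem (h (1 / 2) (by norm_num)) (hI.finite_mem (eventually_cofinite.mp hlarge))) ?_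
  intro n _
  by_cases hn : 1 / 2 ≤ ∑' k, Set.univ.indicator (A n) k
  · exact Or.inl hn
  · exact Or.inr fun h => hn h.le

def aIDensityFilter (hA : RegularMatrix A) (hI : AdmissibleIdeal I) : Filter ℕ :=
  comk (AIDensity I A · 0) (aIDensity_empty_zero hI) (fun _ hN _ h => hN.zero_mono hA hI h)
    (fun _ hM _ hN => hM.zero_union hA hI hN)

variable (hA : RegularMatrix A) (hI : AdmissibleIdeal I)

lemma eventually_aIDensityFilter_iff {p : ℕ → Prop} :
    (∀ᶠ k in aIDensityFilter hA hI, p k) ↔ AIDensity I A {k | ¬ p k} 0 :=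
  Iff.rfl

instance aIDensityFilter_neBot : (aIDensityFilter hA hI).NeBot :=
  ⟨fun h => not_aIDensity_univ_zero hA hI <| by
    simpa using (eventually_aIDensityFilter_iff hA hI (p := fun _ => False)).mp (h ▸ eventually_bot)⟩

lemma aIStatClusterPts_eq_setOf_mapClusterPt {X : Type*} [MetricSpace X] (x : ℕ → X) :
    AIStatClusterPts I A x = {ν | MapClusterPt ν (aIDensityFilter hA hI) x} := by
  ext ν
  simp only [Set.mem_ofPred_eq, Metric.nhds_basis_ball.mapClusterPt_iff_frequently,
    Filter.Frequently, eventually_aIDensityFilter_iff, not_not, Metric.mem_ball]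
  rfl

end DensityZero

theorem stmt_19 {X : Type*} [MetricSpace X] (A : ℕ → ℕ → ℝ) (I : Set (Set ℕ))
    (hA : RegularMatrix A) (hI : AdmissibleIdeal I) (x : ℕ → X)
    (C : Set X) (hC : IsCompact C) (hb : AIDensity I A {k : ℕ | x k ∉ C} 0) :
    (AIStatClusterPts I A x).Nonempty ∧ IsCompact (AIStatClusterPts I A x) ∧
      AIStatClusterPts I A x ⊆ C := by
  rw [aIStatClusterPts_eq_setOf_mapClusterPt hA hI]
  have hxC : ∀ᶠ k in aIDensityFilter hA hI, x k ∈ C := hb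
  have hsub : {ν | MapClusterPt ν (aIDensityFilter hA hI) x} ⊆ C := fun _ hν =>
    hC.isClosed.mem_of_mapClusterPt hν hxC
  obtain ⟨ν, -, hν⟩ := hC.exists_mapClusterPt (tendsto_principal.mpr hxC)
  exact ⟨⟨ν, hν⟩, hC.of_isClosed_subset isClosed_setOfPred_clusterPt hsub, hsub⟩
end
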